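/- Let f be a positive C² solution of the spherically symmetric CMC ODE with |f'| ≤ 1 such that f(t) → 0 as t ↗ T for some finite T. Then |f'(t)| → 1 as t ↗ T; moreover there are ε > 0 and C > 0 such that √(1 − f'(t)²) ≤ C·(T − t) for all t ∈ (T − ε, T). -/

import Mathlib

/-!
Write `γ = f'/√(1 - f'²)` and `η = f √(1 - f'²)`. Since `|f'| ≤ 1` and `f → 0`, `f(t) ≤ T - t`.

If `f'² = 1` at some point, Grönwall's inequality for `1 - f'²`, whose derivative is bounded by a
multiple of itself wherever `f` is bounded below, gives `f'² = 1` up to `T`. Otherwise the ODE reads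
`γ' = d + 1 - d/η`. From `η ≤ f ≤ T - t` we get `γ' ≤ d + 1 - d/(T - t)`, so `γ → -∞`
logarithmically. From `-γη = -f'f ≤ T - t` we get `γ' ≤ d + 1 + dγ/(T - t)`, so once `γ < 0` the
function `(T - t)γ + (d + 1)(T - t)²/2` is nonincreasing; once it is negative, `γ ≤ -c/(T - t)`.
Finally `√(1 - f'²) = f'/γ ≤ -1/γ ≤ (T - t)/c`.
-/

open Set Filter Topology

lemma antitoneOn_Ioo_of_hasDerivAt_nonpos {g g' : ℝ → ℝ} {a b : ℝ}
    (hg : ∀ x ∈ Ioo a b, HasDerivAt g (g' x) x) (hg' : ∀ x ∈ Ioo a b, g' x ≤ 0) :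
    AntitoneOn g (Ioo a b) :=
  antitoneOn_of_hasDerivWithinAt_nonpos (convex_Ioo a b)
    (fun x hx => (hg x hx).continuousAt.continuousWithinAt)
    (fun x hx => by rw [interior_Ioo] at hx; exact (hg x hx).hasDerivWithinAt)
    (fun x hx => by rw [interior_Ioo] at hx; exact hg' x hx)

lemma tendsto_sub_nhdsLT_nhdsGT_zero (T : ℝ) : Tendsto (fun t => T - t) (𝓝[<] T) (𝓝[>] 0) :=
  tendsto_nhdsWithin_iff.2
    ⟨tendsto_nhdsWithin_of_tendsto_nhds ((continuous_sub_left T).tendsto' T 0 (sub_self T)),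
      eventually_nhdsWithin_of_forall fun _ ht => mem_Ioi.2 (sub_pos.2 ht)⟩

lemma le_sub_of_abs_deriv_le_one {f : ℝ → ℝ} {a T t : ℝ} (hf : DifferentiableOn ℝ f (Ioo a T))
    (hder : ∀ s ∈ Ioo a T, |deriv f s| ≤ 1) (hlim : Tendsto f (𝓝[<] T) (𝓝 0))
    (ht : t ∈ Ioo a T) : f t ≤ T - t := by
  have hlip : ∀ᶠ u in 𝓝[<] T, f t ≤ f u + (u - t) := by
    filter_upwards [Ioo_mem_nhdsLT ht.2] with u hu
    have := (convex_Ioo a T).norm_image_sub_le_of_norm_deriv_le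
      (fun x hx => hf.differentiableAt (isOpen_Ioo.mem_nhds hx))
      (fun x hx => by simpa only [Real.norm_eq_abs] using hder x hx) ⟨ht.1.trans hu.1, hu.2⟩ ht
    rw [Real.norm_eq_abs, Real.norm_eq_abs, one_mul, abs_sub_comm t,
      abs_of_pos (sub_pos.2 hu.1)] at this
    linarith [le_abs_self (f t - f u)]
  have hlim' : Tendsto (fun u => f u + (u - t)) (𝓝[<] T) (𝓝 (0 + (T - t))) :=
    hlim.add (((continuous_id.sub continuous_const).tendsto T).mono_left nhdsWithin_le_nhds)
  simpa using ge_of_tendsto hlim' hlip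

lemma tendsto_atBot_of_hasDerivAt_le {g g' : ℝ → ℝ} {a T d K : ℝ} (hd : 0 < d) (haT : a < T)
    (hg : ∀ t ∈ Ioo a T, HasDerivAt g (g' t) t) (hg' : ∀ t ∈ Ioo a T, g' t ≤ K - d / (T - t)) :
    Tendsto g (𝓝[<] T) atBot := by
  set ψ : ℝ → ℝ := fun t => g t - d * Real.log (T - t) - K * t
  have hψ : AntitoneOn ψ (Ioo a T) := by
    refine antitoneOn_Ioo_of_hasDerivAt_nonpos (g' := fun t => g' t + d / (T - t) - K)
      (fun t ht => ?_) (fun t ht => by linarith [hg' t ht])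
    have hlog := ((hasDerivAt_id' t).const_sub T).log (sub_pos.2 ht.2).ne'
    exact (((hg t ht).sub (hlog.const_mul d)).sub ((hasDerivAt_id' t).const_mul K)).congr_deriv
      (by ring)
  obtain ⟨t₁, ht₁⟩ := nonempty_Ioo.2 haT
  have hbound : ∀ᶠ t in 𝓝[<] T, g t ≤ d * Real.log (T - t) + (ψ t₁ + K * t) := by
    filter_upwards [Ioo_mem_nhdsLT ht₁.2] with t ht
    have := hψ ht₁ ⟨ht₁.1.trans ht.1, ht.2⟩ ht.1.le
    simp only [ψ] at this
    linarith
  have hlog : Tendsto (fun t => d * Real.log (T - t)) (𝓝[<] T) atBot :=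
    (Real.tendsto_log_nhdsGT_zero.comp (tendsto_sub_nhdsLT_nhdsGT_zero T)).const_mul_atBot hd
  have hlin : ContinuousWithinAt (fun t => ψ t₁ + K * t) (Iio T) T := by fun_prop
  exact tendsto_atBot_mono' _ hbound (hlog.atBot_add hlin)

lemma exists_mul_le_neg_of_hasDerivAt_le {g g' : ℝ → ℝ} {a T d K : ℝ} (hd : 1 ≤ d) (hK : 0 ≤ K)
    (haT : a < T) (hg : ∀ t ∈ Ioo a T, HasDerivAt g (g' t) t)
    (hg' : ∀ t ∈ Ioo a T, g' t ≤ K + d * g t / (T - t)) (hlim : Tendsto g (𝓝[<] T) atBot) :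
    ∃ t₀ ∈ Ioo a T, ∃ c > 0, ∀ t ∈ Ioo t₀ T, (T - t) * g t ≤ -c := by
  set G : ℝ → ℝ := fun t => (T - t) * g t + K / 2 * (T - t) ^ 2
  have hev : ∀ᶠ t in 𝓝[<] T, g t < 0 ∧ g t + K / 2 * (T - t) < 0 := by
    have hlin : ContinuousWithinAt (fun t => K / 2 * (T - t)) (Iio T) T := by fun_prop
    exact (hlim.eventually_lt_atBot 0).and ((hlim.atBot_add hlin).eventually_lt_atBot 0)
  obtain ⟨l, hl, hlT⟩ := (mem_nhdsLT_iff_exists_mem_Ico_Ioo_subset haT).1 hev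
  obtain ⟨t₀, ht₀⟩ := nonempty_Ioo.2 hl.2
  have hG : AntitoneOn G (Ioo l T) := by
    refine antitoneOn_Ioo_of_hasDerivAt_nonpos
      (g' := fun t => -g t + (T - t) * g' t - K * (T - t)) (fun t ht => ?_) (fun t ht => ?_)
    · have h := (hasDerivAt_id' t).const_sub T
      exact ((h.mul (hg t ⟨hl.1.trans_lt ht.1, ht.2⟩)).add ((h.pow 2).const_mul (K / 2)))
        |>.congr_deriv (by push_cast; ring)
    · have htI : t ∈ Ioo a T := ⟨hl.1.trans_lt ht.1, ht.2⟩
      have hTt : 0 < T - t := sub_pos.2 ht.2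
      have h1 : (T - t) * g' t ≤ (T - t) * K + d * g t := by
        calc (T - t) * g' t ≤ (T - t) * (K + d * g t / (T - t)) :=
              mul_le_mul_of_nonneg_left (hg' t htI) hTt.le
          _ = (T - t) * K + d * g t := by field_simp
      nlinarith [mul_nonpos_of_nonneg_of_nonpos (sub_nonneg.2 hd) (hlT ht).1.le]
  have hGt₀ : G t₀ < 0 := by
    have hG₀ : G t₀ = (T - t₀) * (g t₀ + K / 2 * (T - t₀)) := by simp only [G]; ring
    exact hG₀ ▸ mul_neg_of_pos_of_neg (sub_pos.2 ht₀.2) (hlT ht₀).2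
  refine ⟨t₀, ⟨hl.1.trans_lt ht₀.1, ht₀.2⟩, -G t₀, neg_pos.2 hGt₀, fun t ht => ?_⟩
  calc (T - t) * g t ≤ G t := le_add_of_nonneg_right (by positivity)
    _ ≤ G t₀ := hG ht₀ ⟨ht₀.1.trans ht.1, ht.2⟩ ht.1.le
    _ = - -G t₀ := (neg_neg _).symm

lemma tendsto_abs_of_sqrt_one_sub_sq_le {u : ℝ → ℝ} {t₀ T C : ℝ} (ht₀ : t₀ < T)
    (hu : ∀ t ∈ Ioo t₀ T, |u t| ≤ 1) (h : ∀ t ∈ Ioo t₀ T, √(1 - u t ^ 2) ≤ C * (T - t)) :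
    Tendsto (fun t => |u t|) (𝓝[<] T) (𝓝 1) := by
  have hsqrt : Tendsto (fun t => √(1 - u t ^ 2)) (𝓝[<] T) (𝓝 0) := by
    have hlin : ContinuousWithinAt (fun t => C * (T - t)) (Iio T) T := by fun_prop
    refine squeeze_zero' (Eventually.of_forall fun t => Real.sqrt_nonneg _) ?_
      (by simpa using hlin.tendsto)
    filter_upwards [Ioo_mem_nhdsLT ht₀] with t ht using h t ht
  have hcont : Continuous fun x : ℝ => √(1 - x ^ 2) := by fun_prop
  refine ((hcont.tendsto' 0 1 (by simp)).comp hsqrt).congr' ?_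
  filter_upwards [Ioo_mem_nhdsLT ht₀] with t ht
  have hw : 0 ≤ 1 - u t ^ 2 := by
    rw [sub_nonneg, sq_le_one_iff_abs_le_one]
    exact hu t ht
  simp [Real.sq_sqrt hw, Real.sqrt_sq_eq_abs]

lemma Real.rpow_three_halves {x : ℝ} (hx : 0 ≤ x) : x ^ ((3 : ℝ) / 2) = √x ^ 3 := by
  rw [Real.sqrt_eq_rpow, ← Real.rpow_natCast, ← Real.rpow_mul hx]
  norm_num

lemma HasDerivAt.div_sqrt_one_sub_sq {u : ℝ → ℝ} {u' t : ℝ} (hu : HasDerivAt u u' t)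
    (h : 0 < 1 - u t ^ 2) :
    HasDerivAt (fun s => u s / √(1 - u s ^ 2)) (u' / √(1 - u t ^ 2) ^ 3) t := by
  have hs : 0 < √(1 - u t ^ 2) := Real.sqrt_pos.2 h
  have hsq := Real.sq_sqrt h.le
  refine (hu.div (((hu.pow 2).const_sub 1).sqrt h.ne') hs.ne').congr_deriv ?_
  simp only [Pi.pow_apply, Nat.cast_ofNat]
  field_simp
  linear_combination u' * hsq

structure IsCMCSolutionOn (d : ℝ) (f : ℝ → ℝ) (a b : ℝ) : Prop where
  contDiffOn : ContDiffOn ℝ 2 f (Ioo a b)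
  pos : ∀ t ∈ Ioo a b, 0 < f t
  abs_deriv_le_one : ∀ t ∈ Ioo a b, |deriv f t| ≤ 1
  ode : ∀ t ∈ Ioo a b, f t * deriv (deriv f) t + d * (1 - deriv f t ^ 2)
    = (d + 1) * f t * (1 - deriv f t ^ 2) ^ ((3 : ℝ) / 2)

-- The paper's `γ` and `η`.
noncomputable def cmcGamma (f : ℝ → ℝ) (t : ℝ) : ℝ := deriv f t / √(1 - deriv f t ^ 2)

noncomputable def cmcEta (f : ℝ → ℝ) (t : ℝ) : ℝ := f t * √(1 - deriv f t ^ 2)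

namespace IsCMCSolutionOn

variable {d a b t : ℝ} {f : ℝ → ℝ}

lemma differentiableOn (hf : IsCMCSolutionOn d f a b) : DifferentiableOn ℝ f (Ioo a b) :=
  hf.contDiffOn.differentiableOn (by norm_num)

lemma contDiffOn_deriv (hf : IsCMCSolutionOn d f a b) : ContDiffOn ℝ 1 (deriv f) (Ioo a b) :=
  hf.contDiffOn.deriv_of_isOpen isOpen_Ioo (by norm_num)

lemma hasDerivAt_deriv (hf : IsCMCSolutionOn d f a b) (ht : t ∈ Ioo a b) :
    HasDerivAt (deriv f) (deriv (deriv f) t) t :=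
  ((hf.contDiffOn_deriv.differentiableOn one_ne_zero).differentiableAt
    (isOpen_Ioo.mem_nhds ht)).hasDerivAt

lemma one_sub_sq_deriv_nonneg (hf : IsCMCSolutionOn d f a b) (ht : t ∈ Ioo a b) :
    0 ≤ 1 - deriv f t ^ 2 := by
  rw [sub_nonneg, sq_le_one_iff_abs_le_one]
  exact hf.abs_deriv_le_one t ht

lemma deriv_deriv_eq (hf : IsCMCSolutionOn d f a b) (ht : t ∈ Ioo a b) :
    deriv (deriv f) t
      = (d + 1) * √(1 - deriv f t ^ 2) ^ 3 - d * (1 - deriv f t ^ 2) / f t := by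
  have h := hf.ode t ht
  rw [Real.rpow_three_halves (hf.one_sub_sq_deriv_nonneg ht)] at h
  have := (hf.pos t ht).ne'
  field_simp
  linarith

lemma abs_deriv_deriv_le (hf : IsCMCSolutionOn d f a b) (hd : 0 ≤ d) (ht : t ∈ Ioo a b) :
    |deriv (deriv f) t| ≤ (d + 1 + d / f t) * (1 - deriv f t ^ 2) := by
  have hw := hf.one_sub_sq_deriv_nonneg ht
  have hs : √(1 - deriv f t ^ 2) ≤ 1 := Real.sqrt_le_one.2 (by nlinarith)
  have hs3 : √(1 - deriv f t ^ 2) ^ 3 ≤ 1 - deriv f t ^ 2 := by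
    rw [pow_succ, Real.sq_sqrt hw]
    exact mul_le_of_le_one_right hw hs
  have hA : (d + 1) * √(1 - deriv f t ^ 2) ^ 3 ≤ (d + 1) * (1 - deriv f t ^ 2) :=
    mul_le_mul_of_nonneg_left hs3 (by positivity)
  have hB : 0 ≤ d * (1 - deriv f t ^ 2) / f t := div_nonneg (by positivity) (hf.pos t ht).le
  have hdiv : d / f t * (1 - deriv f t ^ 2) = d * (1 - deriv f t ^ 2) / f t := div_mul_eq_mul_div ..
  have : 0 ≤ (d + 1) * √(1 - deriv f t ^ 2) ^ 3 := by positivity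
  have : 0 ≤ (d + 1) * (1 - deriv f t ^ 2) := by positivity
  rw [hf.deriv_deriv_eq ht, abs_le]
  constructor <;> linarith

lemma le_sub (hf : IsCMCSolutionOn d f a b) (hlim : Tendsto f (𝓝[<] b) (𝓝 0)) (ht : t ∈ Ioo a b) :
    f t ≤ b - t :=
  le_sub_of_abs_deriv_le_one hf.differentiableOn hf.abs_deriv_le_one hlim ht

lemma one_sub_sq_deriv_eq_zero (hf : IsCMCSolutionOn d f a b) (hd : 0 ≤ d) {t₀ : ℝ}
    (ht₀ : t₀ ∈ Ioo a b) (h₀ : 1 - deriv f t₀ ^ 2 = 0) (ht : t ∈ Ioo t₀ b) :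
    1 - deriv f t ^ 2 = 0 := by
  have hsub : Icc t₀ t ⊆ Ioo a b := Icc_subset_Ioo ht₀.1 ht.2
  obtain ⟨x₀, hx₀, hmin⟩ := isCompact_Icc.exists_isMinOn (nonempty_Icc.2 ht.1.le)
    (hf.contDiffOn.continuousOn.mono hsub)
  have hfx₀ := hf.pos x₀ (hsub hx₀)
  refine eq_zero_of_abs_deriv_le_mul_abs_self_of_eq_zero_right
    (f := fun x => 1 - deriv f x ^ 2) (f' := fun x => -(2 * deriv f x * deriv (deriv f) x))
    (K := 2 * (d + 1 + d / f x₀))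
    ((continuousOn_const.sub (hf.contDiffOn_deriv.continuousOn.pow 2)).mono hsub)
    (fun x hx => ?_) h₀ (fun x hx => ?_) t (right_mem_Icc.2 ht.1.le)
  · refine HasDerivAt.hasDerivWithinAt ?_
    simpa [mul_comm, mul_assoc, mul_left_comm] using
      ((hf.hasDerivAt_deriv (hsub (Ico_subset_Icc_self hx))).pow 2).const_sub 1
  · have hx' := hsub (Ico_subset_Icc_self hx)
    have hw := hf.one_sub_sq_deriv_nonneg hx'
    have hfx : d / f x ≤ d / f x₀ :=
      div_le_div_of_nonneg_left hd hfx₀ (hmin (Ico_subset_Icc_self hx))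
    have h1 := hf.abs_deriv_deriv_le hd hx'
    have h2 : |deriv f x| ≤ 1 := hf.abs_deriv_le_one x hx'
    rw [Real.norm_eq_abs, Real.norm_eq_abs, abs_of_nonneg hw, abs_neg, abs_mul, abs_mul,
      abs_two]
    calc 2 * |deriv f x| * |deriv (deriv f) x|
        ≤ 2 * 1 * ((d + 1 + d / f x) * (1 - deriv f x ^ 2)) := by gcongr
      _ ≤ 2 * (d + 1 + d / f x₀) * (1 - deriv f x ^ 2) := by nlinarith

lemma cmcEta_pos (hf : IsCMCSolutionOn d f a b) (ht : t ∈ Ioo a b) (hw : 0 < 1 - deriv f t ^ 2) :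
    0 < cmcEta f t :=
  mul_pos (hf.pos t ht) (Real.sqrt_pos.2 hw)

lemma cmcEta_le (hf : IsCMCSolutionOn d f a b) (ht : t ∈ Ioo a b) : cmcEta f t ≤ f t := by
  have hw := hf.one_sub_sq_deriv_nonneg ht
  exact mul_le_of_le_one_right (hf.pos t ht).le (Real.sqrt_le_one.2 (by nlinarith))

lemma cmcGamma_mul_cmcEta (hw : 0 < 1 - deriv f t ^ 2) :
    cmcGamma f t * cmcEta f t = deriv f t * f t := by
  have := (Real.sqrt_pos.2 hw).ne'
  unfold cmcGamma cmcEta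
  field_simp

lemma hasDerivAt_cmcGamma (hf : IsCMCSolutionOn d f a b) (ht : t ∈ Ioo a b)
    (hw : 0 < 1 - deriv f t ^ 2) :
    HasDerivAt (cmcGamma f) (d + 1 - d / cmcEta f t) t := by
  refine ((hf.hasDerivAt_deriv ht).div_sqrt_one_sub_sq hw).congr_deriv ?_
  have hs := (Real.sqrt_pos.2 hw).ne'
  have hsq := Real.sq_sqrt hw.le
  have := (hf.pos t ht).ne'
  rw [hf.deriv_deriv_eq ht, cmcEta]
  set s := √(1 - deriv f t ^ 2)
  rw [← hsq]
  field_simp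

lemma exists_sqrt_one_sub_sq_deriv_le_of_pos (hf : IsCMCSolutionOn d f a b) (hd : 1 ≤ d)
    (hab : a < b) (hlim : Tendsto f (𝓝[<] b) (𝓝 0)) (hw : ∀ t ∈ Ioo a b, 0 < 1 - deriv f t ^ 2) :
    ∃ t₀ ∈ Ioo a b, ∃ C > 0, ∀ t ∈ Ioo t₀ b, √(1 - deriv f t ^ 2) ≤ C * (b - t) := by
  have hγ : ∀ t ∈ Ioo a b, HasDerivAt (cmcGamma f) (d + 1 - d / cmcEta f t) t :=
    fun t ht => hf.hasDerivAt_cmcGamma ht (hw t ht)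
  have hγ_le : ∀ t ∈ Ioo a b, d + 1 - d / cmcEta f t ≤ d + 1 - d / (b - t) := fun t ht => by
    gcongr
    exacts [hf.cmcEta_pos ht (hw t ht), (hf.cmcEta_le ht).trans (hf.le_sub hlim ht)]
  have hγ_le' : ∀ t ∈ Ioo a b, d + 1 - d / cmcEta f t ≤ d + 1 + d * cmcGamma f t / (b - t) := by
    intro t ht
    have hγη : -(cmcGamma f t * cmcEta f t) ≤ b - t := by
      rw [cmcGamma_mul_cmcEta (hw t ht)]
      nlinarith [abs_le.1 (hf.abs_deriv_le_one t ht), hf.pos t ht, hf.le_sub hlim ht]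
    have : -(d * cmcGamma f t) / (b - t) ≤ d / cmcEta f t := by
      rw [div_le_div_iff₀ (sub_pos.2 ht.2) (hf.cmcEta_pos ht (hw t ht))]
      nlinarith [mul_le_mul_of_nonneg_left hγη (by linarith : (0 : ℝ) ≤ d)]
    rw [neg_div] at this
    linarith
  obtain ⟨t₀, ht₀, c, hc, hγ_rate⟩ := exists_mul_le_neg_of_hasDerivAt_le hd (by linarith) hab hγ
    hγ_le' (tendsto_atBot_of_hasDerivAt_le (by linarith) hab hγ hγ_le)
  refine ⟨t₀, ht₀, c⁻¹, inv_pos.2 hc, fun t ht => ?_⟩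
  have htI : t ∈ Ioo a b := ⟨ht₀.1.trans ht.1, ht.2⟩
  have hsγ : √(1 - deriv f t ^ 2) * cmcGamma f t = deriv f t := by
    have := (Real.sqrt_pos.2 (hw t htI)).ne'
    unfold cmcGamma
    field_simp
  rw [inv_mul_eq_div, le_div_iff₀ hc]
  calc √(1 - deriv f t ^ 2) * c ≤ √(1 - deriv f t ^ 2) * -((b - t) * cmcGamma f t) := by
        gcongr
        linarith [hγ_rate t ht]
    _ = (b - t) * -deriv f t := by linear_combination (t - b) * hsγ
    _ ≤ b - t := by nlinarith [abs_le.1 (hf.abs_deriv_le_one t htI), sub_pos.2 ht.2]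

lemma exists_sqrt_one_sub_sq_deriv_le (hf : IsCMCSolutionOn d f a b) (hd : 1 ≤ d)
    (hab : a < b) (hlim : Tendsto f (𝓝[<] b) (𝓝 0)) :
    ∃ t₀ ∈ Ioo a b, ∃ C > 0, ∀ t ∈ Ioo t₀ b, √(1 - deriv f t ^ 2) ≤ C * (b - t) := by
  by_cases hz : ∃ t₀ ∈ Ioo a b, 1 - deriv f t₀ ^ 2 = 0
  · obtain ⟨t₀, ht₀, h₀⟩ := hz
    refine ⟨t₀, ht₀, 1, one_pos, fun t ht => ?_⟩
    rw [hf.one_sub_sq_deriv_eq_zero (by linarith) ht₀ h₀ ht, Real.sqrt_zero, one_mul]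
    exact (sub_pos.2 ht.2).le
  · push Not at hz
    exact hf.exists_sqrt_one_sub_sq_deriv_le_of_pos hd hab hlim fun t ht =>
      (hf.one_sub_sq_deriv_nonneg ht).lt_of_ne (hz t ht).symm

end IsCMCSolutionOn

/-- At a finite-time collapse `f(t) → 0` as `t ↗ T` of a solution of the spherically
symmetric CMC ODE, `|f'(t)| → 1`; moreover `√(1 − f'(t)²) ≤ C·(T − t)` in a
neighbourhood of the collapse time. -/
theorem stmt11 (d : ℕ) (hd : 1 ≤ d) (a T : ℝ) (haT : a < T) (f : ℝ → ℝ)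
    (hf : ContDiffOn ℝ 2 f (Set.Ioo a T))
    (hpos : ∀ t ∈ Set.Ioo a T, 0 < f t)
    (hder : ∀ t ∈ Set.Ioo a T, |deriv f t| ≤ 1)
    (hode : ∀ t ∈ Set.Ioo a T,
      f t * deriv (deriv f) t + (d : ℝ) * (1 - (deriv f t) ^ 2)
        = ((d : ℝ) + 1) * f t * (1 - (deriv f t) ^ 2) ^ ((3 : ℝ) / 2))
    (hcollapse : Filter.Tendsto f (nhdsWithin T (Set.Iio T)) (nhds 0)) :
    Filter.Tendsto (fun t => |deriv f t|) (nhdsWithin T (Set.Iio T)) (nhds 1) ∧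
    ∃ ε > (0 : ℝ), ∃ C > (0 : ℝ), ∀ t ∈ Set.Ioo (T - ε) T,
      Real.sqrt (1 - (deriv f t) ^ 2) ≤ C * (T - t) := by
  have hsol : IsCMCSolutionOn d f a T := ⟨hf, hpos, hder, hode⟩
  obtain ⟨t₀, ht₀, C, hC, hbound⟩ :=
    hsol.exists_sqrt_one_sub_sq_deriv_le (by exact_mod_cast hd) haT hcollapse
  refine ⟨tendsto_abs_of_sqrt_one_sub_sq_le ht₀.2
    (fun t ht => hder t ⟨ht₀.1.trans ht.1, ht.2⟩) hbound, T - t₀, sub_pos.2 ht₀.2, C, hC, ?_⟩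
  rwa [sub_sub_cancel]
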